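/- arXiv:1203.0407 — 3 statements merged into one kernel-verified Lean document; each statement's English description precedes it below -/
import Mathlib

section
/- Let P be a weakly connected convex finite collection of cells and let [a,b] ⊂ ℕ² be the smallest interval containing V(P), with a=(i,j) and b=(k,l). Then |V(P)| − |P| = (k+l) − (i+j) + 1, i.e. the number of vertices of P minus the number of cells of P equals size([a,b]) + 1. -/
open scoped BigOperators

abbrev Cell : Type := ℕ × ℕ

/-- The four corners of the unit cell with lower left corner `a`. -/
def cellVerts (a : Cell) : Finset (ℕ × ℕ) :=
  {a, (a.1 + 1, a.2), (a.1, a.2 + 1), (a.1 + 1, a.2 + 1)}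

/-- The vertex set of a collection of cells. -/
def verts (P : Finset Cell) : Finset (ℕ × ℕ) := P.biUnion cellVerts

/-- Row convexity of a collection of cells. -/
def RowConvex (P : Finset Cell) : Prop :=
  ∀ a ∈ P, ∀ b ∈ P, a.2 = b.2 → ∀ r : ℕ, a.1 ≤ r → r ≤ b.1 → (r, a.2) ∈ P

/-- Column convexity of a collection of cells. -/
def ColConvex (P : Finset Cell) : Prop :=
  ∀ a ∈ P, ∀ b ∈ P, a.1 = b.1 → ∀ s : ℕ, a.2 ≤ s → s ≤ b.2 → (a.1, s) ∈ P

/-- A collection of cells is convex if it is row and column convex. -/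
def IsConvexColl (P : Finset Cell) : Prop := RowConvex P ∧ ColConvex P

/-- Weak connectedness: any two cells are joined by a sequence of cells of `P`
in which consecutive cells share at least one vertex. -/
def WeaklyConnected (P : Finset Cell) : Prop :=
  ∀ a ∈ P, ∀ b ∈ P,
    Relation.ReflTransGen
      (fun c d => c ∈ P ∧ d ∈ P ∧ (cellVerts c ∩ cellVerts d).Nonempty) a b

/-- Two cells share an edge. -/
def edgeAdj (a b : Cell) : Prop :=
  (a.1 = b.1 ∧ (a.2 + 1 = b.2 ∨ b.2 + 1 = a.2)) ∨
  (a.2 = b.2 ∧ (a.1 + 1 = b.1 ∨ b.1 + 1 = a.1))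

/-- Connectedness: any two cells are joined by an edge-sharing path of cells of `P`. -/
def ConnectedColl (P : Finset Cell) : Prop :=
  ∀ a ∈ P, ∀ b ∈ P,
    Relation.ReflTransGen (fun c d => c ∈ P ∧ d ∈ P ∧ edgeAdj c d) a b

/-- `Q` is a connected component of `P`. -/
def IsComponent (P Q : Finset Cell) : Prop :=
  Q ⊆ P ∧ Q.Nonempty ∧ ConnectedColl Q ∧
    ∀ R : Finset Cell, Q ⊆ R → R ⊆ P → ConnectedColl R → R = Q

/-- The cell `c` belongs to the interval `[a,b]`. -/
def cellInBox (a b : ℕ × ℕ) (c : Cell) : Prop :=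
  a.1 ≤ c.1 ∧ c.1 + 1 ≤ b.1 ∧ a.2 ≤ c.2 ∧ c.2 + 1 ≤ b.2

/-- `c` is a border cell of the interval `[a,b]`. -/
def borderCell (a b : ℕ × ℕ) (c : Cell) : Prop :=
  cellInBox a b c ∧ (c.1 = a.1 ∨ c.1 + 1 = b.1 ∨ c.2 = a.2 ∨ c.2 + 1 = b.2)

/-- A collection of cells is simple (has no holes). -/
def SimpleColl (P : Finset Cell) : Prop :=
  ∀ a b : ℕ × ℕ, a.1 < b.1 → a.2 < b.2 →
    (∀ v ∈ verts P, a.1 < v.1 ∧ v.1 < b.1 ∧ a.2 < v.2 ∧ v.2 < b.2) →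
    ∀ c : Cell, cellInBox a b c → c ∉ P →
      ∃ d : Cell, borderCell a b d ∧
        Relation.ReflTransGen
          (fun u v => cellInBox a b u ∧ cellInBox a b v ∧ u ∉ P ∧ v ∉ P ∧ edgeAdj u v) c d

/-- `[a,b]` is an inner interval of `P`: it is proper and all of its cells belong to `P`. -/
def InnerInterval (P : Finset Cell) (a b : ℕ × ℕ) : Prop :=
  a.1 < b.1 ∧ a.2 < b.2 ∧
    ∀ r s : ℕ, a.1 ≤ r → r < b.1 → a.2 ≤ s → s < b.2 → (r, s) ∈ P

/-- The set of inner 2-minors of `P`. -/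
def innerMinors (K : Type*) [Field K] (P : Finset Cell) :
    Set (MvPolynomial {v : ℕ × ℕ // v ∈ verts P} K) :=
  { f | ∃ a b c d : {v : ℕ × ℕ // v ∈ verts P},
      InnerInterval P a.1 b.1 ∧ c.1 = (b.1.1, a.1.2) ∧ d.1 = (a.1.1, b.1.2) ∧
      f = MvPolynomial.X a * MvPolynomial.X b - MvPolynomial.X c * MvPolynomial.X d }

/-- The ideal of inner 2-minors of `P`. -/
noncomputable def innerIdeal (K : Type*) [Field K] (P : Finset Cell) :
    Ideal (MvPolynomial {v : ℕ × ℕ // v ∈ verts P} K) :=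
  Ideal.span (innerMinors K P)

lemma mem_cellVerts' {v : ℕ × ℕ} {a : Cell} (h : v ∈ cellVerts a) :
    (v.1 = a.1 ∨ v.1 = a.1 + 1) ∧ (v.2 = a.2 ∨ v.2 = a.2 + 1) := by
  simp only [cellVerts, Finset.mem_insert, Finset.mem_singleton, Prod.ext_iff] at h
  rcases h with h|h|h|h <;> simp [h.1, h.2]

lemma shares' {u v : Cell} (h : (cellVerts u ∩ cellVerts v).Nonempty) :
    u.1 ≤ v.1 + 1 ∧ v.1 ≤ u.1 + 1 ∧ u.2 ≤ v.2 + 1 ∧ v.2 ≤ u.2 + 1 := by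
  obtain ⟨w, hw⟩ := h
  rw [Finset.mem_inter] at hw
  obtain ⟨hx1, hy1⟩ := mem_cellVerts' hw.1
  obtain ⟨hx2, hy2⟩ := mem_cellVerts' hw.2
  omega

lemma cross_path' {r : Cell → Cell → Prop}
    (hr : ∀ u v, r u v → v.1 ≤ u.1 + 1) {a b : Cell}
    (hab : Relation.ReflTransGen r a b) :
    ∀ c : ℕ, a.1 ≤ c → c < b.1 → ∃ u v, r u v ∧ u.1 = c ∧ v.1 = c + 1 := by
  induction hab with
  | refl => intro c h1 h2; omega
  | tail hab' hstep ih =>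
      intro c h1 h2
      rename_i b' b''
      by_cases hcb : c < b'.1
      · exact ih c h1 hcb
      · have := hr _ _ hstep
        exact ⟨b', b'', hstep, by omega, by omega⟩


lemma sumMax' (t : ℕ → ℕ) :
    ∀ n i L : ℕ,
      (∀ c d, i ≤ c → t (c+1) < t c → c + 1 ≤ d → d ≤ i + n → t d ≤ t (c+1)) →
      (∀ c, i ≤ c → c ≤ i + n → t c ≤ L) →
      (∃ c, i ≤ c ∧ c ≤ i + n ∧ t c = L) →
      t i + t (i + n) + ∑ x ∈ Finset.Icc (i+1) (i+n), max (t (x-1)) (t x)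
        = (∑ c ∈ Finset.Icc i (i+n), t c) + L := by
  intro n
  induction n with
  | zero =>
      intro i L hdec hub hex
      obtain ⟨c, h1, h2, h3⟩ := hex
      have hc : c = i := by omega
      subst hc
      simp [h3]
  | succ n ih =>
      intro i L hdec hub hex
      have hsplit1 : Finset.Icc (i+1) (i+(n+1)) = insert (i+1) (Finset.Icc (i+1+1) (i+1+n)) := by
        ext x; simp [Finset.mem_Icc, Finset.mem_insert]; omega
      have hsplit2 : Finset.Icc i (i+(n+1)) = insert i (Finset.Icc (i+1) (i+1+n)) := by
        ext x; simp [Finset.mem_Icc, Finset.mem_insert]; omega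
      have hnotmem1 : i+1 ∉ Finset.Icc (i+1+1) (i+1+n) := by simp
      have hnotmem2 : i ∉ Finset.Icc (i+1) (i+1+n) := by simp
      rw [hsplit1, hsplit2, Finset.sum_insert hnotmem1, Finset.sum_insert hnotmem2]
      have hend : i + (n+1) = i + 1 + n := by omega
      rw [hend]
      by_cases hcase : t (i+1) < t i
      · -- decreasing at the start
        have hub' : ∀ c, i+1 ≤ c → c ≤ i+1+n → t c ≤ t (i+1) := by
          intro c h1 h2
          exact hdec i c (le_refl i) hcase h1 (by omega)
        have hE := ih (i+1) (t (i+1))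
          (fun c d h1 h2 h3 h4 => hdec c d (by omega) h2 h3 (by omega))
          hub' ⟨i+1, le_refl _, by omega, rfl⟩
        have hLti : L = t i := by
          obtain ⟨c, h1, h2, h3⟩ := hex
          rcases Nat.eq_or_lt_of_le h1 with h|h
          · have h3' : t i = L := by rw [h]; exact h3
            omega
          · have := hub' c (by omega) (by omega)
            have := hub i (le_refl i) (by omega)
            omega
        have hmax : max (t (i+1-1)) (t (i+1)) = t i := by
          simp only [Nat.add_sub_cancel]; omega
        rw [hmax, hLti]
        omega
      · push_neg at hcase
        have hex' : ∃ c, i+1 ≤ c ∧ c ≤ i+1+n ∧ t c = L := by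
          obtain ⟨c, h1, h2, h3⟩ := hex
          rcases Nat.eq_or_lt_of_le h1 with h|h
          · have h3' : t i = L := by rw [h]; exact h3
            refine ⟨i+1, by omega, by omega, ?_⟩
            have := hub (i+1) (by omega) (by omega)
            omega
          · exact ⟨c, by omega, by omega, h3⟩
        have hE := ih (i+1) L
          (fun c d h1 h2 h3 h4 => hdec c d (by omega) h2 h3 (by omega))
          (fun c h1 h2 => hub c (by omega) (by omega)) hex'
        have hmax : max (t (i+1-1)) (t (i+1)) = t (i+1) := by
          simp only [Nat.add_sub_cancel]; omega
        rw [hmax]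
        omega

lemma sumMin' (s : ℕ → ℕ) :
    ∀ n i J : ℕ,
      (∀ c d, i ≤ c → s c < s (c+1) → c + 1 ≤ d → d ≤ i + n → s (c+1) ≤ s d) →
      (∀ c, i ≤ c → c ≤ i + n → J ≤ s c) →
      (∃ c, i ≤ c ∧ c ≤ i + n ∧ s c = J) →
      s i + s (i + n) + ∑ x ∈ Finset.Icc (i+1) (i+n), min (s (x-1)) (s x)
        = (∑ c ∈ Finset.Icc i (i+n), s c) + J := by
  intro n
  induction n with
  | zero =>
      intro i J hinc hlb hex
      obtain ⟨c, h1, h2, h3⟩ := hex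
      have hc : c = i := by omega
      subst hc
      simp [h3]
  | succ n ih =>
      intro i J hinc hlb hex
      have hsplit1 : Finset.Icc (i+1) (i+(n+1)) = insert (i+1) (Finset.Icc (i+1+1) (i+1+n)) := by
        ext x; simp [Finset.mem_Icc, Finset.mem_insert]; omega
      have hsplit2 : Finset.Icc i (i+(n+1)) = insert i (Finset.Icc (i+1) (i+1+n)) := by
        ext x; simp [Finset.mem_Icc, Finset.mem_insert]; omega
      have hnotmem1 : i+1 ∉ Finset.Icc (i+1+1) (i+1+n) := by simp
      have hnotmem2 : i ∉ Finset.Icc (i+1) (i+1+n) := by simp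
      rw [hsplit1, hsplit2, Finset.sum_insert hnotmem1, Finset.sum_insert hnotmem2]
      have hend : i + (n+1) = i + 1 + n := by omega
      rw [hend]
      by_cases hcase : s i < s (i+1)
      · have hlb' : ∀ c, i+1 ≤ c → c ≤ i+1+n → s (i+1) ≤ s c := by
          intro c h1 h2
          exact hinc i c (le_refl i) hcase h1 (by omega)
        have hE := ih (i+1) (s (i+1))
          (fun c d h1 h2 h3 h4 => hinc c d (by omega) h2 h3 (by omega))
          hlb' ⟨i+1, le_refl _, by omega, rfl⟩
        have hJsi : J = s i := by
          obtain ⟨c, h1, h2, h3⟩ := hex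
          rcases Nat.eq_or_lt_of_le h1 with h|h
          · have h3' : s i = J := by rw [h]; exact h3
            omega
          · have := hlb' c (by omega) (by omega)
            have := hlb i (le_refl i) (by omega)
            omega
        have hmin : min (s (i+1-1)) (s (i+1)) = s i := by
          simp only [Nat.add_sub_cancel]; omega
        rw [hmin, hJsi]
        omega
      · push_neg at hcase
        have hex' : ∃ c, i+1 ≤ c ∧ c ≤ i+1+n ∧ s c = J := by
          obtain ⟨c, h1, h2, h3⟩ := hex
          rcases Nat.eq_or_lt_of_le h1 with h|h
          · have h3' : s i = J := by rw [h]; exact h3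
            refine ⟨i+1, by omega, by omega, ?_⟩
            have := hlb (i+1) (by omega) (by omega)
            omega
          · exact ⟨c, by omega, by omega, h3⟩
        have hE := ih (i+1) J
          (fun c d h1 h2 h3 h4 => hinc c d (by omega) h2 h3 (by omega))
          (fun c h1 h2 => hlb c (by omega) (by omega)) hex'
        have hmin : min (s (i+1-1)) (s (i+1)) = s (i+1) := by
          simp only [Nat.add_sub_cancel]; omega
        rw [hmin]
        omega

/-- For a weakly connected convex collection of cells with smallest
bounding interval `[(i,j),(k,l)]`, one has `|V(P)| - |P| = (k-i) + (l-j) + 1`. -/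
theorem card_verts_sub_card_cells (P : Finset Cell)
    (hw : WeaklyConnected P) (hc : IsConvexColl P) (hne : P.Nonempty)
    (i j k l : ℕ)
    (hbound : ∀ v ∈ verts P, i ≤ v.1 ∧ v.1 ≤ k ∧ j ≤ v.2 ∧ v.2 ≤ l)
    (hi : ∃ v ∈ verts P, v.1 = i) (hk : ∃ v ∈ verts P, v.1 = k)
    (hj : ∃ v ∈ verts P, v.2 = j) (hl : ∃ v ∈ verts P, v.2 = l) :
    (verts P).card = P.card + (k - i) + (l - j) + 1 := by
  classical
  have hvertmem : ∀ a ∈ P, ∀ v ∈ cellVerts a, v ∈ verts P := by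
    intro a ha v hv; exact Finset.mem_biUnion.mpr ⟨a, ha, hv⟩
  have hselfmem : ∀ a : Cell, a ∈ cellVerts a := by intro a; simp [cellVerts]
  have hoppmem : ∀ a : Cell, ((a.1+1, a.2+1) : ℕ × ℕ) ∈ cellVerts a := by
    intro a; simp [cellVerts]
  have hcell : ∀ a ∈ P, i ≤ a.1 ∧ a.1 + 1 ≤ k ∧ j ≤ a.2 ∧ a.2 + 1 ≤ l := by
    intro a ha
    have h1 := hbound a (hvertmem a ha a (hselfmem a))
    have h2 := hbound (a.1+1, a.2+1) (hvertmem a ha _ (hoppmem a))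
    simp only at h1 h2
    omega
  obtain ⟨a0, ha0⟩ := hne
  have hik : i < k := by have := hcell a0 ha0; omega
  have hjl : j < l := by have := hcell a0 ha0; omega
  have hvertcell : ∀ v ∈ verts P, ∃ a ∈ P, v ∈ cellVerts a := fun v hv =>
    Finset.mem_biUnion.mp hv
  have hcoli : ∃ a ∈ P, a.1 = i := by
    obtain ⟨v, hv, hvi⟩ := hi
    obtain ⟨a, ha, hva⟩ := hvertcell v hv
    have h1 := (mem_cellVerts' hva).1
    have h2 := hcell a ha
    exact ⟨a, ha, by omega⟩
  have hcolk : ∃ a ∈ P, a.1 = k - 1 := by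
    obtain ⟨v, hv, hvk⟩ := hk
    obtain ⟨a, ha, hva⟩ := hvertcell v hv
    have h1 := (mem_cellVerts' hva).1
    have h2 := hcell a ha
    exact ⟨a, ha, by omega⟩
  set r : Cell → Cell → Prop :=
    fun u v => u ∈ P ∧ v ∈ P ∧ (cellVerts u ∩ cellVerts v).Nonempty with hrdef
  have hr1 : ∀ u v, r u v → v.1 ≤ u.1 + 1 := fun u v h => (shares' h.2.2).2.1
  have hcolocc : ∀ c, i ≤ c → c ≤ k - 1 → ∃ y, (c, y) ∈ P := by
    intro c h1 h2
    obtain ⟨a, ha, hai⟩ := hcoli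
    obtain ⟨b, hb, hbk⟩ := hcolk
    by_cases hck : c = b.1
    · exact ⟨b.2, by rw [hck]; exact hb⟩
    · obtain ⟨u, v, huv, hu, _⟩ := cross_path' hr1 (hw a ha b hb) c (by omega) (by omega)
      exact ⟨u.2, by rw [← hu]; exact huv.1⟩
  set S : ℕ → ℕ := fun c => sInf {y | (c, y) ∈ P} with hSdef
  set T : ℕ → ℕ := fun c => sSup {y | (c, y) ∈ P} with hTdef
  have hbdd : ∀ c : ℕ, BddAbove {y | (c, y) ∈ P} := by
    intro c
    exact ⟨l, fun y hy => by have := hcell _ hy; omega⟩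
  have hSmem : ∀ c, i ≤ c → c ≤ k-1 → (c, S c) ∈ P := by
    intro c h1 h2
    exact Nat.sInf_mem (hcolocc c h1 h2)
  have hTmem : ∀ c, i ≤ c → c ≤ k-1 → (c, T c) ∈ P := by
    intro c h1 h2
    exact Nat.sSup_mem (hcolocc c h1 h2) (hbdd c)
  have hmemle : ∀ c y, (c, y) ∈ P → S c ≤ y ∧ y ≤ T c :=
    fun c y h => ⟨Nat.sInf_le h, le_csSup (hbdd c) h⟩
  have hiff : ∀ c y, i ≤ c → c ≤ k-1 → S c ≤ y → y ≤ T c → (c, y) ∈ P := by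
    intro c y h1 h2 h3 h4
    exact hc.2 (c, S c) (hSmem c h1 h2) (c, T c) (hTmem c h1 h2) rfl y h3 h4
  have hST : ∀ c, i ≤ c → c ≤ k-1 → S c ≤ T c := by
    intro c h1 h2
    exact (hmemle c (S c) (hSmem c h1 h2)).2
  have hov : ∀ c, i ≤ c → c + 1 ≤ k - 1 → S c ≤ T (c+1) + 1 ∧ S (c+1) ≤ T c + 1 := by
    intro c h1 h2
    have hA := hSmem c h1 (by omega)
    have hB := hSmem (c+1) (by omega) h2
    obtain ⟨u, v, huv, hu, hv⟩ :=
      cross_path' hr1 (hw _ hA _ hB) c (le_refl c) (Nat.lt_succ_self c)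
    obtain ⟨hup, hvp, hshare⟩ := huv
    have h3 := shares' hshare
    have h4 := hmemle u.1 u.2 hup
    have h5 := hmemle v.1 v.2 hvp
    rw [hu] at h4
    rw [hv] at h5
    omega
  have hdecT : ∀ c d, i ≤ c → T (c+1) < T c → c + 1 ≤ d → d ≤ k - 1 → T d ≤ T (c+1) := by
    intro c d hic hlt hcd
    induction d, hcd using Nat.le_induction with
    | base => intro _; exact le_refl _
    | succ d hd ih =>
        intro hdk
        have ihd := ih (by omega)
        by_contra hcon
        push_neg at hcon
        have h1 : (c, T (c+1) + 1) ∈ P := by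
          apply hiff c _ (by omega) (by omega)
          · exact (hov c (by omega) (by omega)).1
          · omega
        have h2 : (d+1, T (c+1) + 1) ∈ P := by
          apply hiff (d+1) _ (by omega) hdk
          · have := (hov d (by omega) (by omega)).2
            omega
          · omega
        have h3 : (c+1, T (c+1) + 1) ∈ P :=
          hc.1 (c, T (c+1) + 1) h1 (d+1, T (c+1) + 1) h2 rfl (c+1) (by omega) (by omega)
        have := (hmemle _ _ h3).2
        omega
  have hincS : ∀ c d, i ≤ c → S c < S (c+1) → c + 1 ≤ d → d ≤ k - 1 → S (c+1) ≤ S d := by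
    intro c d hic hlt hcd
    induction d, hcd using Nat.le_induction with
    | base => intro _; exact le_refl _
    | succ d hd ih =>
        intro hdk
        have ihd := ih (by omega)
        by_contra hcon
        push_neg at hcon
        have h1 : (c, S (c+1) - 1) ∈ P := by
          apply hiff c _ (by omega) (by omega)
          · omega
          · have := (hov c (by omega) (by omega)).2
            omega
        have h2 : (d+1, S (c+1) - 1) ∈ P := by
          apply hiff (d+1) _ (by omega) hdk
          · omega
          · have := (hov d (by omega) (by omega)).1
            omega
        have h3 : (c+1, S (c+1) - 1) ∈ P :=
          hc.1 (c, S (c+1) - 1) h1 (d+1, S (c+1) - 1) h2 rfl (c+1) (by omega) (by omega)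
        have := (hmemle _ _ h3).1
        omega
  have hTl : ∀ c, i ≤ c → c ≤ k-1 → T c + 1 ≤ l := fun c h1 h2 =>
    (hcell _ (hTmem c h1 h2)).2.2.2
  have hSj : ∀ c, i ≤ c → c ≤ k-1 → j ≤ S c := fun c h1 h2 =>
    (hcell _ (hSmem c h1 h2)).2.2.1
  have hTex : ∃ c, i ≤ c ∧ c ≤ k-1 ∧ T c + 1 = l := by
    obtain ⟨v, hv, hvl⟩ := hl
    obtain ⟨a, ha, hva⟩ := hvertcell v hv
    have h1 := mem_cellVerts' hva
    have h2 := hcell a ha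
    refine ⟨a.1, by omega, by omega, ?_⟩
    have h4 := (hmemle a.1 a.2 ha).2
    have h5 := hTl a.1 (by omega) (by omega)
    omega
  have hSex : ∃ c, i ≤ c ∧ c ≤ k-1 ∧ S c = j := by
    obtain ⟨v, hv, hvj⟩ := hj
    obtain ⟨a, ha, hva⟩ := hvertcell v hv
    have h1 := mem_cellVerts' hva
    have h2 := hcell a ha
    refine ⟨a.1, by omega, by omega, ?_⟩
    have h4 := (hmemle a.1 a.2 ha).1
    have h5 := hSj a.1 (by omega) (by omega)
    omega
  -- decomposition of P by columns
  have hinj : ∀ c : ℕ, Function.Injective (fun y : ℕ => ((c, y) : Cell)) := by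
    intro c y1 y2 h
    simpa using h
  have hPdec : P = (Finset.Icc i (k-1)).biUnion
      (fun c => (Finset.Icc (S c) (T c)).image (fun y => ((c, y) : Cell))) := by
    ext p
    simp only [Finset.mem_biUnion, Finset.mem_image, Finset.mem_Icc]
    constructor
    · intro hp
      have h1 := hcell p hp
      have h2 := hmemle p.1 p.2 hp
      exact ⟨p.1, ⟨by omega, by omega⟩, p.2, ⟨h2.1, h2.2⟩, rfl⟩
    · rintro ⟨c, ⟨h1, h2⟩, y, ⟨h3, h4⟩, rfl⟩
      exact hiff c y h1 h2 h3 h4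
  have hdisjcol : ∀ (s : Finset ℕ) (f g : ℕ → ℕ),
      ∀ x ∈ s, ∀ y ∈ s, x ≠ y →
      Disjoint ((Finset.Icc (f x) (g x)).image (fun z => ((x, z) : Cell)))
        ((Finset.Icc (f y) (g y)).image (fun z => ((y, z) : Cell))) := by
    intro s f g x _ y _ hxy
    rw [Finset.disjoint_left]
    intro a ha1 ha2
    simp only [Finset.mem_image] at ha1 ha2
    obtain ⟨z1, _, h1⟩ := ha1
    obtain ⟨z2, _, h2⟩ := ha2
    exact hxy (congrArg Prod.fst (h1.trans h2.symm))
  have hPcard : P.card + (∑ c ∈ Finset.Icc i (k-1), S c)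
      = (∑ c ∈ Finset.Icc i (k-1), T c) + (k - i) := by
    rw [hPdec, Finset.card_biUnion (hdisjcol _ S T)]
    rw [← Finset.sum_add_distrib]
    have hcongr : ∀ c ∈ Finset.Icc i (k-1),
        ((Finset.Icc (S c) (T c)).image (fun y => ((c, y) : Cell))).card + S c = T c + 1 := by
      intro c hcmem
      simp only [Finset.mem_Icc] at hcmem
      rw [Finset.card_image_of_injective _ (hinj c), Nat.card_Icc]
      have := hST c hcmem.1 hcmem.2
      omega
    rw [Finset.sum_congr rfl hcongr, Finset.sum_add_distrib, Finset.sum_const,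
      Nat.card_Icc, smul_eq_mul, mul_one]
    have : k - 1 + 1 - i = k - i := by omega
    rw [this]
  -- the vertex columns
  set lo : ℕ → ℕ := fun x =>
    if x = i then S i else if x = k then S (k-1) else min (S (x-1)) (S x) with hlodef
  set hi' : ℕ → ℕ := fun x =>
    if x = i then T i else if x = k then T (k-1) else max (T (x-1)) (T x) with hhidef
  have hkey : ∀ c x, i ≤ c → c ≤ k-1 → (x = c ∨ x = c + 1) → lo x ≤ S c ∧ T c ≤ hi' x := by
    intro c x h1 h2 h3
    rcases h3 with rfl | rfl
    · simp only [hlodef, hhidef]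
      split_ifs with hca hck
      · subst hca
        exact ⟨le_refl _, le_refl _⟩
      · omega
      · exact ⟨min_le_right _ _, le_max_right _ _⟩
    · simp only [hlodef, hhidef]
      split_ifs with hca hck
      · omega
      · have hck' : k - 1 = c := by omega
        rw [hck']
        exact ⟨le_refl _, le_refl _⟩
      · have hcc : c + 1 - 1 = c := by omega
        rw [hcc]
        exact ⟨min_le_left _ _, le_max_left _ _⟩
  have hmk : ∀ c x y, i ≤ c → c ≤ k-1 → (x = c ∨ x = c+1) → S c ≤ y → y ≤ T c + 1 →
      ((x, y) : ℕ × ℕ) ∈ verts P := by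
    intro c x y h1 h2 h3 h4 h5
    by_cases hy : y ≤ T c
    · refine hvertmem (c, y) (hiff c y h1 h2 h4 hy) _ ?_
      rcases h3 with rfl | rfl <;> simp [cellVerts]
    · have hy' : y = T c + 1 := by omega
      refine hvertmem (c, T c) (hTmem c h1 h2) _ ?_
      subst hy'
      rcases h3 with rfl | rfl <;> simp [cellVerts]
  have hVdec : verts P = (Finset.Icc i k).biUnion
      (fun x => (Finset.Icc (lo x) (hi' x + 1)).image (fun y => ((x, y) : Cell))) := by
    ext v
    simp only [Finset.mem_biUnion, Finset.mem_image, Finset.mem_Icc]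
    constructor
    · intro hv
      obtain ⟨a, ha, hva⟩ := hvertcell v hv
      have h1 := mem_cellVerts' hva
      have h2 := hcell a ha
      have h3 := hmemle a.1 a.2 ha
      have h4 : v.1 = a.1 ∨ v.1 = a.1 + 1 := h1.1
      have h5 := hkey a.1 v.1 (by omega) (by omega) h4
      refine ⟨v.1, ⟨by omega, by omega⟩, v.2, ⟨by omega, by omega⟩, rfl⟩
    · rintro ⟨x, ⟨h1, h2⟩, y, ⟨h3, h4⟩, rfl⟩
      by_cases hxi : x = i
      · subst hxi
        have hlox : lo x = S x := by simp [hlodef]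
        have hhix : hi' x = T x := by simp [hhidef]
        exact hmk x x y (le_refl x) (by omega) (Or.inl rfl) (by omega) (by omega)
      · by_cases hxk : x = k
        · have hlox : lo x = S (k-1) := by
            simp only [hlodef]; rw [if_neg hxi, if_pos hxk]
          have hhix : hi' x = T (k-1) := by
            simp only [hhidef]; rw [if_neg hxi, if_pos hxk]
          exact hmk (k-1) x y (by omega) (le_refl _) (Or.inr (by omega)) (by omega) (by omega)
        · have hlox : lo x = min (S (x-1)) (S x) := by simp [hlodef, hxi, hxk]
          have hhix : hi' x = max (T (x-1)) (T x) := by simp [hhidef, hxi, hxk]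
          have hx1 : i ≤ x - 1 := by omega
          have hx2 : x - 1 + 1 = x := by omega
          have hx3 : x ≤ k - 1 := by omega
          have hovx := hov (x-1) hx1 (by omega)
          rw [hx2] at hovx
          have hST1 := hST (x-1) hx1 (by omega)
          have hST2 := hST x (by omega) hx3
          rw [hlox] at h3
          rw [hhix] at h4
          have hcases : (S (x-1) ≤ y ∧ y ≤ T (x-1) + 1) ∨ (S x ≤ y ∧ y ≤ T x + 1) := by
            omega
          rcases hcases with ⟨hA, hB⟩ | ⟨hA, hB⟩
          · exact hmk (x-1) x y hx1 (by omega) (Or.inr (by omega)) hA hB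
          · exact hmk x x y (by omega) hx3 (Or.inl rfl) hA hB
  have hlohi : ∀ x, i ≤ x → x ≤ k → lo x ≤ hi' x + 1 := by
    intro x h1 h2
    by_cases hxi : x = i
    · subst hxi
      have := hST x h1 (by omega)
      simp only [hlodef, hhidef, if_pos rfl]
      omega
    · by_cases hxk : x = k
      · have := hST (k-1) (by omega) (le_refl _)
        simp only [hlodef, hhidef, if_neg hxi, if_pos hxk]
        omega
      · have := hST x (by omega) (by omega)
        simp only [hlodef, hhidef, if_neg hxi, if_neg hxk]
        omega
  have hVcard : (verts P).card + (∑ x ∈ Finset.Icc i k, lo x)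
      = (∑ x ∈ Finset.Icc i k, (hi' x + 1)) + (k + 1 - i) := by
    rw [hVdec, Finset.card_biUnion (hdisjcol _ lo (fun x => hi' x + 1))]
    rw [← Finset.sum_add_distrib]
    have hcongr : ∀ x ∈ Finset.Icc i k,
        ((Finset.Icc (lo x) (hi' x + 1)).image (fun y => ((x, y) : Cell))).card + lo x
          = (hi' x + 1) + 1 := by
      intro x hxmem
      simp only [Finset.mem_Icc] at hxmem
      rw [Finset.card_image_of_injective _ (hinj x), Nat.card_Icc]
      have := hlohi x hxmem.1 hxmem.2
      omega
    rw [Finset.sum_congr rfl hcongr, Finset.sum_add_distrib, Finset.sum_const,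
      Nat.card_Icc, smul_eq_mul, mul_one]
  -- split sums over Icc i k
  have hsplitf : ∀ f : ℕ → ℕ, (∑ x ∈ Finset.Icc i k, f x)
      = f i + f k + ∑ x ∈ Finset.Icc (i+1) (k-1), f x := by
    intro f
    have h1 : Finset.Icc i k = insert i (insert k (Finset.Icc (i+1) (k-1))) := by
      ext x
      simp only [Finset.mem_Icc, Finset.mem_insert]
      omega
    rw [h1, Finset.sum_insert (by simp only [Finset.mem_Icc, Finset.mem_insert]; omega),
      Finset.sum_insert (by simp only [Finset.mem_Icc]; omega)]
    ring
  have hlo_i : lo i = S i := by simp [hlodef]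
  have hlo_k : lo k = S (k-1) := by
    simp only [hlodef]
    rw [if_neg (show ¬ k = i by omega)]
    simp
  have hhi_i : hi' i = T i := by simp [hhidef]
  have hhi_k : hi' k = T (k-1) := by
    simp only [hhidef]
    rw [if_neg (show ¬ k = i by omega)]
    simp
  have hlomid : ∀ x ∈ Finset.Icc (i+1) (k-1), lo x = min (S (x-1)) (S x) := by
    intro x hx
    simp only [Finset.mem_Icc] at hx
    simp only [hlodef]
    rw [if_neg (by omega), if_neg (by omega)]
  have hhimid : ∀ x ∈ Finset.Icc (i+1) (k-1), hi' x = max (T (x-1)) (T x) := by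
    intro x hx
    simp only [Finset.mem_Icc] at hx
    simp only [hhidef]
    rw [if_neg (by omega), if_neg (by omega)]
  have hsum_lo : ∑ x ∈ Finset.Icc i k, lo x
      = S i + S (k-1) + ∑ x ∈ Finset.Icc (i+1) (k-1), min (S (x-1)) (S x) := by
    rw [hsplitf lo, hlo_i, hlo_k, Finset.sum_congr rfl hlomid]
  have hsum_hi : ∑ x ∈ Finset.Icc i k, hi' x
      = T i + T (k-1) + ∑ x ∈ Finset.Icc (i+1) (k-1), max (T (x-1)) (T x) := by
    rw [hsplitf hi', hhi_i, hhi_k, Finset.sum_congr rfl hhimid]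
  have hsum_hi1 : ∑ x ∈ Finset.Icc i k, (hi' x + 1)
      = (∑ x ∈ Finset.Icc i k, hi' x) + (k + 1 - i) := by
    rw [Finset.sum_add_distrib, Finset.sum_const, Nat.card_Icc, smul_eq_mul, mul_one]
  have hn : i + (k-1-i) = k-1 := by omega
  have hEmax := sumMax' T (k-1-i) i (l-1)
    (by
      intro c d h1 h2 h3 h4
      exact hdecT c d h1 h2 h3 (by omega))
    (by
      intro c h1 h2
      have := hTl c h1 (by omega)
      omega)
    (by
      obtain ⟨c, h1, h2, h3⟩ := hTex
      exact ⟨c, h1, by omega, by omega⟩)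
  rw [hn] at hEmax
  have hEmin := sumMin' S (k-1-i) i j
    (by
      intro c d h1 h2 h3 h4
      exact hincS c d h1 h2 h3 (by omega))
    (by
      intro c h1 h2
      exact hSj c h1 (by omega))
    (by
      obtain ⟨c, h1, h2, h3⟩ := hSex
      exact ⟨c, h1, by omega, h3⟩)
  rw [hn] at hEmin
  have hl1 : 1 ≤ l := by omega
  omega
end

section
/- Let P be a weakly connected convex finite collection of cells. Then the ideal I_P of inner 2-minors of P equals the toric ideal J_P, the kernel of the map φ: K[x_{ij} : (i,j) ∈ V(P)] → K[s,t] with φ(x_{ij}) = s_i t_j. -/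
open scoped BigOperators

/-- The toric map `φ` sending `x_{(i,j)}` to `s_i t_j`. -/
noncomputable def phiP (K : Type*) [Field K] (P : Finset Cell) :
    MvPolynomial {v : ℕ × ℕ // v ∈ verts P} K →ₐ[K] MvPolynomial (ℕ ⊕ ℕ) K :=
  MvPolynomial.aeval fun v =>
    MvPolynomial.X (Sum.inl v.1.1) * MvPolynomial.X (Sum.inr v.1.2)

/-!
Every rectangle binomial `x_a x_b - x_c x_d` on the vertex set `V` (`a, b, c, d` the corners of an
axis-parallel rectangle) is zero or an inner 2-minor up to sign: in a weakly connected convex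
collection a rectangle whose corners are vertices is an inner interval. So it suffices that these
binomials generate `ker φ`.

Since `φ` maps monomials to monomials, `ker φ` is spanned by the binomials `x^u - x^w` with
`φ(x^u) = φ(x^w)`, i.e. `u` and `w` have equally many points on every line `{i} × ℕ` and
`ℕ × {j}`. If `u` and `w` share no variable, take the point `b = (i, j)` of `u` with the least `j`,
points `s₀ = (i, j₀)` and `s₁ = (i₁, j)` of `w`, and a point `c = (i₁, j₁)` of `u`; by the choice
of `b`, `j ≤ j₀` and `j ≤ j₁`. Each set `{y | (x, y) ∈ V}` is an interval, so `(i, j₁) ∈ V` if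
`j₁ ≤ j₀` and `(i₁, j₀) ∈ V` otherwise. Swapping the corners of the rectangle on `b, c` in `u`,
respectively on `s₀, s₁` in `w`, produces a common variable, which is cancelled by induction.
-/

open MvPolynomial

theorem Relation.ReflTransGen.exists_rel_of_not {γ : Type*} {r : γ → γ → Prop} {p : γ → Prop}
    {a b : γ} (h : Relation.ReflTransGen r a b) (ha : p a) (hb : ¬p b) :
    ∃ x y, r x y ∧ p x ∧ ¬p y := by
  induction h with
  | refl => exact absurd ha hb
  | @tail c d _ hcd ih =>
    by_cases hc : p c
    · exact ⟨c, d, hcd, hc, hb⟩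
    · exact ih hc

theorem Finsupp.exists_eq_single_add {ι : Type*} {m : ι →₀ ℕ} {p : ι} (hp : p ∈ m.support) :
    ∃ r, m = single p 1 + r :=
  le_iff_exists_add.1 (single_le_iff.2 (Nat.one_le_iff_ne_zero.2 (mem_support_iff.1 hp)))

theorem Finsupp.exists_eq_single_add_single_add {ι : Type*} {m : ι →₀ ℕ} {p q : ι}
    (hp : p ∈ m.support) (hq : q ∈ m.support) (hpq : p ≠ q) :
    ∃ r, m = single p 1 + single q 1 + r := by
  obtain ⟨r, rfl⟩ := exists_eq_single_add hp
  obtain ⟨r', rfl⟩ := exists_eq_single_add (m := r) (p := q) (by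
    simpa [single_apply, hpq] using hq)
  exact ⟨r', (add_assoc _ _ _).symm⟩

theorem MvPolynomial.ker_le_of_monomial_sub_mem {R σ τ : Type*} [CommRing R]
    (φ : MvPolynomial σ R →ₐ[R] MvPolynomial τ R) (g : (σ →₀ ℕ) → (τ →₀ ℕ))
    (hφ : ∀ m c, φ (monomial m c) = monomial (g m) c) {I : Ideal (MvPolynomial σ R)}
    (hI : ∀ m m', g m = g m' → monomial m (1 : R) - monomial m' 1 ∈ I) :
    RingHom.ker φ ≤ I := by
  set rep := Function.invFun g
  -- `ψ ∘ φ` sends each monomial to a chosen representative of its fibre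
  let ψ : MvPolynomial τ R → MvPolynomial σ R := AddMonoidAlgebra.mapDomain rep
  have hsub : ∀ f, f - ψ (φ f) ∈ I := by
    intro f
    induction f using MvPolynomial.induction_on' with
    | monomial m c =>
      have hψ : ψ (monomial (g m) c) = monomial (rep (g m)) c :=
        AddMonoidAlgebra.mapDomain_single
      rw [hφ, hψ, ← mul_one c, ← C_mul_monomial, ← C_mul_monomial, ← mul_sub]
      exact I.mul_mem_left _ (hI _ _ (Function.invFun_eq ⟨m, rfl⟩).symm)
    | add f₁ f₂ h₁ h₂ =>
      rw [map_add, show ψ (φ f₁ + φ f₂) = ψ (φ f₁) + ψ (φ f₂) from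
        AddMonoidAlgebra.mapDomain_add .., add_sub_add_comm]
      exact add_mem h₁ h₂
  intro f hf
  simpa [RingHom.mem_ker.1 hf, ψ] using hsub f

section Toric

variable {R α β : Type*} [CommRing R]

noncomputable def toricMap (R : Type*) [CommRing R] (V : Finset (α × β)) :
    MvPolynomial V R →ₐ[R] MvPolynomial (α ⊕ β) R :=
  aeval fun v => X (Sum.inl v.1.1) * X (Sum.inr v.1.2)

noncomputable def toricExponent (V : Finset (α × β)) : (V →₀ ℕ) →+ (α ⊕ β →₀ ℕ) :=
  Finsupp.liftAddHom fun v =>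
    Finsupp.singleAddHom (Sum.inl v.1.1) + Finsupp.singleAddHom (Sum.inr v.1.2)

noncomputable def rectangleIdeal (R : Type*) [CommRing R] (V : Finset (α × β)) :
    Ideal (MvPolynomial V R) :=
  Ideal.span {f | ∃ a b c d : V, c.1 = (b.1.1, a.1.2) ∧ d.1 = (a.1.1, b.1.2) ∧
    f = X a * X b - X c * X d}

variable {V : Finset (α × β)}

theorem toricExponent_apply (m : V →₀ ℕ) :
    toricExponent V m = m.sum fun v k =>
      Finsupp.single (Sum.inl v.1.1) k + Finsupp.single (Sum.inr v.1.2) k :=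
  Finsupp.liftAddHom_apply _ _

theorem toricExponent_single_ne_zero (v : V) : toricExponent V (Finsupp.single v 1) ≠ 0 := by
  simp [toricExponent_apply]

theorem toricMap_monomial (m : V →₀ ℕ) (c : R) :
    toricMap R V (monomial m c) = monomial (toricExponent V m) c := by
  rw [toricExponent_apply, monomial_finsupp_sum_index, toricMap, aeval_monomial,
    algebraMap_eq]
  congr 1
  refine Finsupp.prod_congr fun v _ => ?_
  rw [← one_mul (1 : R), ← monomial_mul, ← X_pow_eq_monomial, ← X_pow_eq_monomial, mul_pow]

theorem toricExponent_inl_ne_zero_iff (m : V →₀ ℕ) (x : α) :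
    toricExponent V m (Sum.inl x) ≠ 0 ↔ ∃ v ∈ m.support, v.1.1 = x := by
  classical
  simp only [toricExponent_apply, Finsupp.sum, Finsupp.finsetSum_apply, ne_eq,
    Finset.sum_eq_zero_iff, not_forall, Finsupp.add_apply, Finsupp.single_apply,
    Sum.inl.injEq, reduceCtorEq, if_false, add_zero, exists_prop]
  refine exists_congr fun v => and_congr_right fun hv => ?_
  rw [Finsupp.mem_support_iff] at hv
  split_ifs <;> simp_all

theorem toricExponent_inr_ne_zero_iff (m : V →₀ ℕ) (y : β) :
    toricExponent V m (Sum.inr y) ≠ 0 ↔ ∃ v ∈ m.support, v.1.2 = y := by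
  classical
  simp only [toricExponent_apply, Finsupp.sum, Finsupp.finsetSum_apply, ne_eq,
    Finset.sum_eq_zero_iff, not_forall, Finsupp.add_apply, Finsupp.single_apply,
    Sum.inr.injEq, reduceCtorEq, if_false, zero_add, exists_prop]
  refine exists_congr fun v => and_congr_right fun hv => ?_
  rw [Finsupp.mem_support_iff] at hv
  split_ifs <;> simp_all

theorem exists_mem_support_fst_eq {u w : V →₀ ℕ} (h : toricExponent V u = toricExponent V w)
    {v : V} (hv : v ∈ u.support) : ∃ v' ∈ w.support, v'.1.1 = v.1.1 :=
  (toricExponent_inl_ne_zero_iff w _).1 (h ▸ (toricExponent_inl_ne_zero_iff u _).2 ⟨v, hv, rfl⟩)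

theorem exists_mem_support_snd_eq {u w : V →₀ ℕ} (h : toricExponent V u = toricExponent V w)
    {v : V} (hv : v ∈ u.support) : ∃ v' ∈ w.support, v'.1.2 = v.1.2 :=
  (toricExponent_inr_ne_zero_iff w _).1 (h ▸ (toricExponent_inr_ne_zero_iff u _).2 ⟨v, hv, rfl⟩)

theorem rectangleIdeal_le_ker : rectangleIdeal R V ≤ RingHom.ker (toricMap R V) := by
  refine Ideal.span_le.2 ?_
  rintro f ⟨a, b, c, d, hc, hd, rfl⟩
  simp [toricMap, hc, hd]
  ring

theorem toricExponent_eq_of_mk_eq [Nontrivial R] {u w : V →₀ ℕ}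
    (h : Ideal.Quotient.mk (rectangleIdeal R V) (monomial u 1) =
      Ideal.Quotient.mk (rectangleIdeal R V) (monomial w 1)) :
    toricExponent V u = toricExponent V w := by
  have := rectangleIdeal_le_ker (Ideal.Quotient.eq.1 h)
  rwa [RingHom.mem_ker, map_sub, sub_eq_zero, toricMap_monomial, toricMap_monomial,
    monomial_left_inj one_ne_zero] at this

theorem mk_monomial_swap_rectangle {a b c d : V} (hc : c.1 = (b.1.1, a.1.2))
    (hd : d.1 = (a.1.1, b.1.2)) (r : V →₀ ℕ) :
    Ideal.Quotient.mk (rectangleIdeal R V)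
        (monomial (Finsupp.single a 1 + Finsupp.single b 1 + r) 1) =
      Ideal.Quotient.mk (rectangleIdeal R V)
        (monomial (Finsupp.single c 1 + Finsupp.single d 1 + r) 1) := by
  have h : Ideal.Quotient.mk (rectangleIdeal R V) (X a * X b) =
      Ideal.Quotient.mk (rectangleIdeal R V) (X c * X d) :=
    Ideal.Quotient.eq.2 (Ideal.subset_span ⟨a, b, c, d, hc, hd, rfl⟩)
  have hX : ∀ a b : V, monomial (Finsupp.single a 1 + Finsupp.single b 1 + r) (1 : R) =
      X a * X b * monomial r 1 := fun a b => by
    rw [X, X, monomial_mul, monomial_mul, one_mul, one_mul]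
  rw [hX, hX, map_mul, h, ← map_mul]

variable [LinearOrder β]

theorem exists_mk_monomial_eq_single_add (hV : ∀ x, Set.OrdConnected {y | (x, y) ∈ V})
    {u w : V →₀ ℕ} (h : toricExponent V u = toricExponent V w) (hu : u ≠ 0) :
    ∃ p r₁ r₂, Ideal.Quotient.mk (rectangleIdeal R V) (monomial u 1) =
        Ideal.Quotient.mk (rectangleIdeal R V) (monomial (Finsupp.single p 1 + r₁) 1) ∧
      Ideal.Quotient.mk (rectangleIdeal R V) (monomial w 1) =
        Ideal.Quotient.mk (rectangleIdeal R V) (monomial (Finsupp.single p 1 + r₂) 1) := by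
  by_cases hcommon : ∃ p ∈ u.support, p ∈ w.support
  · obtain ⟨p, hpu, hpw⟩ := hcommon
    obtain ⟨r₁, rfl⟩ := Finsupp.exists_eq_single_add hpu
    obtain ⟨r₂, rfl⟩ := Finsupp.exists_eq_single_add hpw
    exact ⟨p, r₁, r₂, rfl, rfl⟩
  push Not at hcommon
  obtain ⟨b, hb, hbmin⟩ := u.support.exists_min_image (fun v => v.1.2)
    (Finsupp.support_nonempty_iff.2 hu)
  obtain ⟨s₀, hs₀, hs₀b⟩ := exists_mem_support_fst_eq h hb
  obtain ⟨s₁, hs₁, hs₁b⟩ := exists_mem_support_snd_eq h hb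
  obtain ⟨c, hc, hcs₁⟩ := exists_mem_support_fst_eq h.symm hs₁
  obtain ⟨v, hv, hvs₀⟩ := exists_mem_support_snd_eq h.symm hs₀
  have hs₁_ne : s₁ ≠ b := fun h => hcommon b hb (h ▸ hs₁)
  have hbc : b ≠ c := by
    rintro rfl
    exact hs₁_ne (Subtype.ext (Prod.ext hcs₁.symm hs₁b))
  have hs₀s₁ : s₀ ≠ s₁ := by
    rintro rfl
    exact hs₁_ne (Subtype.ext (Prod.ext hs₀b hs₁b))
  have hbs₀ : b.1.2 ≤ s₀.1.2 := hvs₀ ▸ hbmin v hv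
  rcases le_or_gt c.1.2 s₀.1.2 with hcs₀ | hs₀c
  · have hq : (b.1.1, c.1.2) ∈ V := (hV b.1.1).out b.2 (hs₀b ▸ s₀.2) ⟨hbmin c hc, hcs₀⟩
    obtain ⟨r, rfl⟩ := Finsupp.exists_eq_single_add_single_add hb hc hbc
    obtain ⟨r₂, rfl⟩ := Finsupp.exists_eq_single_add hs₁
    refine ⟨s₁, Finsupp.single ⟨_, hq⟩ 1 + r, r₂, ?_, rfl⟩
    rw [mk_monomial_swap_rectangle (a := b) (b := c) (c := s₁) (d := ⟨_, hq⟩)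
      (Prod.ext hcs₁.symm hs₁b) rfl, add_assoc]
  · have hq : (s₁.1.1, s₀.1.2) ∈ V :=
      (hV s₁.1.1).out (hs₁b ▸ s₁.2) (hcs₁ ▸ c.2) ⟨hbs₀, hs₀c.le⟩
    obtain ⟨r, rfl⟩ := Finsupp.exists_eq_single_add_single_add hs₀ hs₁ hs₀s₁
    obtain ⟨r₁, rfl⟩ := Finsupp.exists_eq_single_add hb
    refine ⟨b, r₁, Finsupp.single ⟨_, hq⟩ 1 + r, rfl, ?_⟩
    rw [mk_monomial_swap_rectangle (a := s₀) (b := s₁) (c := ⟨_, hq⟩) (d := b) rfl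
      (Prod.ext hs₀b.symm hs₁b.symm), add_comm (Finsupp.single _ 1), add_assoc]

theorem mk_monomial_eq_of_toricExponent_eq [Nontrivial R]
    (hV : ∀ x, Set.OrdConnected {y | (x, y) ∈ V}) {u w : V →₀ ℕ}
    (h : toricExponent V u = toricExponent V w) :
    Ideal.Quotient.mk (rectangleIdeal R V) (monomial u 1) =
      Ideal.Quotient.mk (rectangleIdeal R V) (monomial w 1) := by
  induction hu : toricExponent V u using WellFoundedLT.induction generalizing u w with
  | _ e ih =>
    rcases eq_or_ne u 0 with rfl | hu0
    · obtain rfl : w = 0 := by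
        by_contra hw
        obtain ⟨v, hv⟩ := Finsupp.support_nonempty_iff.2 hw
        simpa using exists_mem_support_fst_eq h.symm hv
      rfl
    obtain ⟨p, r₁, r₂, h₁, h₂⟩ := exists_mk_monomial_eq_single_add (R := R) hV h hu0
    have e₁ := toricExponent_eq_of_mk_eq (R := R) h₁
    have e₂ := toricExponent_eq_of_mk_eq (R := R) h₂
    rw [map_add] at e₁ e₂
    have hr : toricExponent V r₁ = toricExponent V r₂ :=
      add_left_cancel (e₁.symm.trans (h.trans e₂))
    have hlt : toricExponent V r₁ < e := by
      rw [← hu, e₁]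
      exact lt_add_of_pos_left _ (pos_iff_ne_zero.2 (toricExponent_single_ne_zero p))
    rw [h₁, h₂, ← one_mul (1 : R), ← monomial_mul, ← monomial_mul, map_mul, map_mul,
      ih _ hlt hr rfl]

theorem ker_toricMap_eq_rectangleIdeal [Nontrivial R]
    (hV : ∀ x, Set.OrdConnected {y | (x, y) ∈ V}) :
    RingHom.ker (toricMap R V) = rectangleIdeal R V :=
  le_antisymm (ker_le_of_monomial_sub_mem _ _ toricMap_monomial fun _ _ h =>
    Ideal.Quotient.eq.1 (mk_monomial_eq_of_toricExponent_eq hV h)) rectangleIdeal_le_ker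

end Toric

theorem mem_cellVerts {v : ℕ × ℕ} {c : Cell} :
    v ∈ cellVerts c ↔ c.1 ≤ v.1 ∧ v.1 ≤ c.1 + 1 ∧ c.2 ≤ v.2 ∧ v.2 ≤ c.2 + 1 := by
  obtain ⟨x, y⟩ := v
  simp only [cellVerts, Finset.mem_insert, Finset.mem_singleton, Prod.ext_iff]
  omega

theorem mem_verts {P : Finset Cell} {v : ℕ × ℕ} :
    v ∈ verts P ↔ ∃ c ∈ P, c.1 ≤ v.1 ∧ v.1 ≤ c.1 + 1 ∧ c.2 ≤ v.2 ∧ v.2 ≤ c.2 + 1 := by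
  simp only [verts, Finset.mem_biUnion, mem_cellVerts]

theorem le_of_cellVerts_inter_nonempty {c d : Cell}
    (h : (cellVerts c ∩ cellVerts d).Nonempty) :
    c.1 ≤ d.1 + 1 ∧ d.1 ≤ c.1 + 1 ∧ c.2 ≤ d.2 + 1 ∧ d.2 ≤ c.2 + 1 := by
  obtain ⟨v, hv⟩ := h
  rw [Finset.mem_inter, mem_cellVerts, mem_cellVerts] at hv
  omega

section Convex

variable {P : Finset Cell}

theorem mem_or_mem_of_adjacent_columns (hw : WeaklyConnected P) (hcc : ColConvex P)
    {c d : Cell} (hc : c ∈ P) (hd : d ∈ P) (hcd : c.1 ≤ d.1 + 1) (hdc : d.1 ≤ c.1 + 1)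
    {s : ℕ} (hcs : c.2 ≤ s) (hsd : s ≤ d.2) : (c.1, s) ∈ P ∨ (d.1, s) ∈ P := by
  rcases eq_or_ne c.1 d.1 with h | h
  · exact .inl (hcc c hc d hd h s hcs hsd)
  -- a path from `c` to `d` steps from the column of `c` into the column of `d` somewhere
  obtain ⟨g, g', ⟨hg, hg', hgg'⟩, hpg, hpg'⟩ := (hw c hc d hd).exists_rel_of_not
    (p := fun e => e.1 ≤ c.1 ∧ c.1 < d.1 ∨ c.1 ≤ e.1 ∧ d.1 < c.1) (by omega) (by omega)
  have := le_of_cellVerts_inter_nonempty hgg'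
  rcases le_or_gt s g.2 with hs | hs
  · exact .inl (hcc c hc g hg (by omega) s hcs hs)
  · have hg'd : g'.1 = d.1 := by omega
    exact .inr (hg'd ▸ hcc g' hg' d hd hg'd s (by omega) hsd)

theorem exists_cell_of_mem_verts (hw : WeaklyConnected P) (hcc : ColConvex P)
    {x y₁ y₂ s : ℕ} (h₁ : (x, y₁) ∈ verts P) (h₂ : (x, y₂) ∈ verts P) (hs₁ : y₁ ≤ s)
    (hs₂ : s < y₂) : ∃ p, p ≤ x ∧ x ≤ p + 1 ∧ (p, s) ∈ P := by
  obtain ⟨c, hc, hc₁, hc₂, hc₃, -⟩ := mem_verts.1 h₁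
  obtain ⟨d, hd, hd₁, hd₂, -, hd₄⟩ := mem_verts.1 h₂
  rcases mem_or_mem_of_adjacent_columns hw hcc hc hd (by omega) (by omega)
    (s := s) (by omega) (by omega) with h | h
  exacts [⟨c.1, hc₁, hc₂, h⟩, ⟨d.1, hd₁, hd₂, h⟩]

theorem ordConnected_verts (hw : WeaklyConnected P) (hcc : ColConvex P) (x : ℕ) :
    Set.OrdConnected {y | (x, y) ∈ verts P} := by
  refine ⟨fun y₁ h₁ y₂ h₂ y ⟨hy₁, hy₂⟩ => ?_⟩
  rcases hy₁.eq_or_lt with rfl | hlt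
  · exact h₁
  obtain ⟨p, hpx, hxp, hp⟩ := exists_cell_of_mem_verts hw hcc h₁ h₂ (s := y - 1) (by omega)
    (by omega)
  exact mem_verts.2 ⟨_, hp, hpx, hxp, by dsimp only; omega, by dsimp only; omega⟩

theorem innerInterval_of_corners_mem_verts (hw : WeaklyConnected P) (hc : IsConvexColl P)
    {i j k l : ℕ} (hik : i < k) (hjl : j < l) (hij : (i, j) ∈ verts P)
    (hil : (i, l) ∈ verts P) (hkj : (k, j) ∈ verts P) (hkl : (k, l) ∈ verts P) :
    InnerInterval P (i, j) (k, l) := by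
  refine ⟨hik, hjl, fun r s hir hrk hjs hsl => ?_⟩
  obtain ⟨p, hpi, -, hp⟩ := exists_cell_of_mem_verts hw hc.2 hij hil hjs hsl
  obtain ⟨q, -, hkq, hq⟩ := exists_cell_of_mem_verts hw hc.2 hkj hkl hjs hsl
  exact hc.1 _ hp _ hq rfl r (by omega) (by omega)

variable (K : Type*) [Field K]

theorem minor_mem_innerIdeal (hw : WeaklyConnected P) (hc : IsConvexColl P) {i j k l : ℕ}
    (hik : i < k) (hjl : j < l) (hij : (i, j) ∈ verts P) (hkl : (k, l) ∈ verts P)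
    (hkj : (k, j) ∈ verts P) (hil : (i, l) ∈ verts P) :
    X ⟨(i, j), hij⟩ * X ⟨(k, l), hkl⟩ - X ⟨(k, j), hkj⟩ * X ⟨(i, l), hil⟩ ∈ innerIdeal K P :=
  Ideal.subset_span (s := innerMinors K P) ⟨⟨_, hij⟩, ⟨_, hkl⟩, ⟨_, hkj⟩, ⟨_, hil⟩,
    innerInterval_of_corners_mem_verts hw hc hik hjl hij hil hkj hkl, rfl, rfl, rfl⟩

theorem rectangle_mem_innerIdeal (hw : WeaklyConnected P) (hc : IsConvexColl P)
    {a b c d : verts P} (hca : c.1 = (b.1.1, a.1.2)) (hda : d.1 = (a.1.1, b.1.2)) :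
    X a * X b - X c * X d ∈ innerIdeal K P := by
  obtain ⟨⟨i₁, j₁⟩, ha⟩ := a
  obtain ⟨⟨i₂, j₂⟩, hb⟩ := b
  obtain ⟨c, hc'⟩ := c
  obtain ⟨d, hd'⟩ := d
  dsimp only at hca hda
  subst hca hda
  rcases eq_or_ne i₁ i₂ with rfl | hi
  · simp
  rcases eq_or_ne j₁ j₂ with rfl | hj
  · simp [mul_comm]
  rcases hi.lt_or_gt with hi | hi <;> rcases hj.lt_or_gt with hj | hj
  · exact minor_mem_innerIdeal K hw hc hi hj ha hb hc' hd'
  · convert neg_mem (minor_mem_innerIdeal K hw hc hi hj hd' hc' hb ha) using 1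
    ring
  · convert neg_mem (minor_mem_innerIdeal K hw hc hi hj hc' hd' ha hb) using 1
    ring
  · convert minor_mem_innerIdeal K hw hc hi hj hb ha hd' hc' using 1
    ring

theorem innerIdeal_eq_rectangleIdeal (hw : WeaklyConnected P) (hc : IsConvexColl P) :
    innerIdeal K P = rectangleIdeal K (verts P) := by
  refine le_antisymm (Ideal.span_mono ?_) (Ideal.span_le.2 ?_)
  · rintro f ⟨a, b, c, d, -, hca, hda, rfl⟩
    exact ⟨a, b, c, d, hca, hda, rfl⟩
  · rintro f ⟨a, b, c, d, hca, hda, rfl⟩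
    exact rectangle_mem_innerIdeal K hw hc hca hda

end Convex

/-- If `P` is weakly connected and convex, then `I_P` equals the
toric ideal `J_P = ker φ`. -/
theorem innerIdeal_eq_toric_of_convex (K : Type*) [Field K] (P : Finset Cell)
    (hw : WeaklyConnected P) (hc : IsConvexColl P) :
    innerIdeal K P = RingHom.ker (phiP K P).toRingHom := by
  rw [innerIdeal_eq_rectangleIdeal K hw hc,
    ← ker_toricMap_eq_rectangleIdeal (ordConnected_verts hw hc.2)]
  rfl
end

section
/- Let P be a finite collection of cells. Then there exists a saturated lattice Λ ⊂ ℤ^{V(P)} such that L_P = ker ψ equals the lattice ideal I_Λ; in particular L_P is a prime ideal. -/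
/-!
Descending induction on `i + j`, starting from the free vertices, shows that `ψ` sends every
variable `x_v` to a Laurent monomial `y^{μ_v}`. Hence `ψ` sums coefficients along the fibres of
the exponent map `u ↦ ∑ u_v μ_v`, and the kernel of such a map is spanned by the binomials
`x^u - x^w` with `u - w` in the kernel `Λ` of the `ℤ`-linear exponent map. This `Λ` is saturated
because `ℤ^F` is torsion-free, and the kernel is prime because the Laurent ring is a domain.
-/

open scoped BigOperators

/-- A vertex of `P` is free if it is not the lower left corner of any cell of `P`. -/
def freeVert (P : Finset Cell) (v : ℕ × ℕ) : Prop := v ∈ verts P ∧ v ∉ P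

/-- The Laurent polynomial ring in the variables `y_c`, `c` a free vertex of `P`. -/
abbrev LaurentRing (K : Type*) [Field K] (P : Finset Cell) : Type _ :=
  AddMonoidAlgebra K ({v : ℕ × ℕ // freeVert P v} →₀ ℤ)

/-- `ψ` is the natural map `S → T`: it sends `x_a` to `y_a` for free vertices `a`, and
satisfies `ψ(x_a) ψ(x_d) = ψ(x_b) ψ(x_c)` whenever `a` is the lower left corner of a
cell of `P` with remaining vertices `b, c, d` (equivalently `ψ(x_a)=ψ(x_b)ψ(x_c)ψ(x_d)⁻¹`).
These two conditions determine `ψ` uniquely. -/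
def psiSpec (K : Type*) [Field K] (P : Finset Cell)
    (ψ : MvPolynomial {v : ℕ × ℕ // v ∈ verts P} K →ₐ[K] LaurentRing K P) : Prop :=
  (∀ v : {v : ℕ × ℕ // v ∈ verts P}, ∀ h : freeVert P v.1,
      ψ (MvPolynomial.X v) = AddMonoidAlgebra.of' K _ (Finsupp.single ⟨v.1, h⟩ 1)) ∧
  (∀ a b c d : {v : ℕ × ℕ // v ∈ verts P}, a.1 ∈ P →
      b.1 = (a.1.1 + 1, a.1.2) → c.1 = (a.1.1, a.1.2 + 1) → d.1 = (a.1.1 + 1, a.1.2 + 1) →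
      ψ (MvPolynomial.X a) * ψ (MvPolynomial.X d) =
        ψ (MvPolynomial.X b) * ψ (MvPolynomial.X c))

open MvPolynomial AddMonoidAlgebra

theorem AddMonoidAlgebra.of'_add {K G : Type*} [Semiring K] [Add G] (a b : G) :
    of' K G (a + b) = of' K G a * of' K G b := by
  rw [of'_apply, of'_apply, of'_apply, single_mul_single, mul_one]

theorem AddMonoidAlgebra.eq_of'_of_mul_of'_eq {K G : Type*} [Semiring K] [AddGroup G]
    {x : AddMonoidAlgebra K G} {a b : G} (h : x * of' K G a = of' K G b) :
    x = of' K G (b - a) := by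
  calc x = x * (of' K G a * of' K G (-a)) := by
        rw [← of'_add, add_neg_cancel, of'_apply, ← one_def, mul_one]
    _ = of' K G (b - a) := by rw [← mul_assoc, h, ← of'_add, sub_eq_add_neg]

theorem Finsupp.linearCombination_int_mapRange_natCast {σ G : Type*} [AddCommGroup G]
    (m : σ → G) (u : σ →₀ ℕ) :
    linearCombination ℤ m (u.mapRange Nat.cast Nat.cast_zero) = linearCombination ℕ m u := by
  simp [linearCombination_apply, sum_mapRange_index, natCast_zsmul]

theorem LinearMap.mem_ker_of_smul_mem_ker {R M N : Type*} [Ring R] [IsDomain R]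
    [AddCommGroup M] [AddCommGroup N] [Module R M] [Module R N] [Module.IsTorsionFree R N]
    (f : M →ₗ[R] N) {c : R} (hc : c ≠ 0) {w : M} (hw : c • w ∈ ker f) : w ∈ ker f := by
  rw [mem_ker, map_smul] at hw
  exact (smul_eq_zero.1 hw).resolve_left hc

section Binomials

variable {σ K : Type*} [CommRing K]

theorem sub_mapDomain_mem_span_binomials (r : (σ →₀ ℕ) → σ →₀ ℕ) (f : MvPolynomial σ K) :
    f - mapDomain r f ∈
      Ideal.span (Set.range fun u => monomial u (1 : K) - monomial (r u) 1) := by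
  induction f using MvPolynomial.induction_on' with
  | monomial u c =>
    have hbinomial : monomial u c - mapDomain r (monomial u c) =
        C c * (monomial u (1 : K) - monomial (r u) 1) := by
      rw [← single_eq_monomial, mapDomain_single]
      simp only [single_eq_monomial, mul_sub, C_mul_monomial, mul_one]
    exact hbinomial ▸ Ideal.mul_mem_left _ _ (Ideal.subset_span ⟨u, rfl⟩)
  | add f g hf hg =>
    rw [mapDomain_add, add_sub_add_comm]
    exact Ideal.add_mem _ hf hg

/-- Moving each exponent to a fixed representative of its `deg`-fibre changes `f` only by
binomials, and the result factors through `mapDomain deg f`. -/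
theorem mem_span_binomials_of_mapDomain_eq_zero {M : Type*} (deg : (σ →₀ ℕ) → M)
    {f : MvPolynomial σ K} (hf : mapDomain deg f = 0) :
    f ∈ Ideal.span {g | ∃ u w, deg u = deg w ∧ g = monomial u (1 : K) - monomial w 1} := by
  set r := Function.invFun deg ∘ deg
  have hr : mapDomain r f = 0 := by
    refine coeff_injective ?_
    rw [coeff_mapDomain, Finsupp.mapDomain_comp, ← coeff_mapDomain deg f, hf]
    simp
  have hspan := sub_mapDomain_mem_span_binomials r f
  rw [hr, sub_zero] at hspan
  refine Ideal.span_mono ?_ hspan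
  rintro _ ⟨u, rfl⟩
  exact ⟨u, r u, (Function.invFun_eq ⟨u, rfl⟩).symm, rfl⟩

variable {M : Type*} [AddCommMonoid M] {m : σ → M}

theorem eq_mapDomainAlgHom_of_X_eq_of' {ψ : MvPolynomial σ K →ₐ[K] AddMonoidAlgebra K M}
    (hψ : ∀ v, ψ (X v) = of' K M (m v)) :
    ψ = mapDomainAlgHom K K (Finsupp.linearCombination ℕ m).toAddMonoidHom := by
  refine MvPolynomial.algHom_ext fun v => ?_
  rw [hψ, mapDomainAlgHom_apply, X, ← single_eq_monomial, mapDomain_single]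
  simp [of'_apply]

theorem ker_eq_span_binomials_of_X_eq_of' {ψ : MvPolynomial σ K →ₐ[K] AddMonoidAlgebra K M}
    (hψ : ∀ v, ψ (X v) = of' K M (m v)) :
    RingHom.ker ψ.toRingHom = Ideal.span {f | ∃ u w,
      Finsupp.linearCombination ℕ m u = Finsupp.linearCombination ℕ m w ∧
        f = monomial u (1 : K) - monomial w 1} := by
  obtain rfl := eq_mapDomainAlgHom_of_X_eq_of' hψ
  refine le_antisymm (fun f hf => mem_span_binomials_of_mapDomain_eq_zero _ hf) ?_
  rw [Ideal.span_le]
  rintro _ ⟨u, w, huw, rfl⟩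
  simp only [SetLike.mem_coe, RingHom.mem_ker, AlgHom.toRingHom_eq_coe, RingHom.coe_coe,
    map_sub, mapDomainAlgHom_apply, ← single_eq_monomial, mapDomain_single,
    LinearMap.toAddMonoidHom_coe, huw, sub_self]

end Binomials

theorem mem_verts_of_mem_cellVerts {P : Finset Cell} {a : Cell} (ha : a ∈ P) {v : ℕ × ℕ}
    (hv : v ∈ cellVerts a) : v ∈ verts P :=
  Finset.mem_biUnion.2 ⟨a, ha, hv⟩

/-- The cell relation determines `ψ(x_a)` for a lower left corner `a` from the three other
corners, which lie strictly higher in `i + j`. -/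
theorem psiSpec.exists_X_eq_of' {K : Type*} [Field K] {P : Finset Cell}
    {ψ : MvPolynomial {v : ℕ × ℕ // v ∈ verts P} K →ₐ[K] LaurentRing K P} (hψ : psiSpec K P ψ)
    (v : {v : ℕ × ℕ // v ∈ verts P}) : ∃ μ, ψ (X v) = of' K _ μ := by
  by_cases hfree : freeVert P v.1
  · exact ⟨_, hψ.1 v hfree⟩
  have hv : v.1 ∈ P := not_not.1 fun h => hfree ⟨v.2, h⟩
  have hb : (v.1.1 + 1, v.1.2) ∈ verts P := mem_verts_of_mem_cellVerts hv (by simp [cellVerts])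
  have hc : (v.1.1, v.1.2 + 1) ∈ verts P := mem_verts_of_mem_cellVerts hv (by simp [cellVerts])
  have hd : (v.1.1 + 1, v.1.2 + 1) ∈ verts P :=
    mem_verts_of_mem_cellVerts hv (by simp [cellVerts])
  obtain ⟨μb, hμb⟩ := psiSpec.exists_X_eq_of' hψ ⟨_, hb⟩
  obtain ⟨μc, hμc⟩ := psiSpec.exists_X_eq_of' hψ ⟨_, hc⟩
  obtain ⟨μd, hμd⟩ := psiSpec.exists_X_eq_of' hψ ⟨_, hd⟩
  refine ⟨μb + μc - μd, eq_of'_of_mul_of'_eq ?_⟩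
  have hcell := hψ.2 v ⟨_, hb⟩ ⟨_, hc⟩ ⟨_, hd⟩ hv rfl rfl rfl
  rwa [hμb, hμc, hμd, ← of'_add] at hcell
termination_by (verts P).sup (fun v => v.1 + v.2) - (v.1.1 + v.1.2)
decreasing_by
  all_goals
    have := Finset.le_sup (f := fun v : ℕ × ℕ => v.1 + v.2) ‹_ ∈ verts P›
    simp only at this ⊢
    omega

/-- `L_P = ker ψ` is the lattice ideal of a saturated lattice
`Λ ⊂ ℤ^{V(P)}`; in particular `L_P` is a prime ideal. -/
theorem LP_is_lattice_ideal (K : Type*) [Field K] (P : Finset Cell)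
    (ψ : MvPolynomial {v : ℕ × ℕ // v ∈ verts P} K →ₐ[K] LaurentRing K P)
    (hψ : psiSpec K P ψ) :
    (∃ Λ : AddSubgroup ({v : ℕ × ℕ // v ∈ verts P} →₀ ℤ),
      (∀ (c : ℤ) (w : {v : ℕ × ℕ // v ∈ verts P} →₀ ℤ), c ≠ 0 → c • w ∈ Λ → w ∈ Λ) ∧
      RingHom.ker ψ.toRingHom = Ideal.span
        { f | ∃ u w : {v : ℕ × ℕ // v ∈ verts P} →₀ ℕ,
            (u.mapRange (Nat.cast : ℕ → ℤ) Nat.cast_zero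
              - w.mapRange (Nat.cast : ℕ → ℤ) Nat.cast_zero) ∈ Λ ∧
            f = MvPolynomial.monomial u (1 : K) - MvPolynomial.monomial w 1 }) ∧
    (RingHom.ker ψ.toRingHom).IsPrime := by
  choose m hm using hψ.exists_X_eq_of'
  refine ⟨⟨(LinearMap.ker (Finsupp.linearCombination ℤ m)).toAddSubgroup,
    fun c w hc => LinearMap.mem_ker_of_smul_mem_ker _ hc, ?_⟩, RingHom.ker_isPrime _⟩
  rw [ker_eq_span_binomials_of_X_eq_of' hm]
  simp_rw [Submodule.mem_toAddSubgroup, LinearMap.mem_ker, map_sub, sub_eq_zero,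
    Finsupp.linearCombination_int_mapRange_natCast]
end
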